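/- Any positive periodic solution u of -Δu + u - u^p = 0 on S¹/ε × ℝ^{N-1} tending to 0 as |x'| → ∞ uniformly in x₁ satisfies an exponential decay estimate: there exist a > 0 and C > 0 such that u(x₁,x') ≤ C e^{-a|x'|} for all (x₁,x'). -/

import Mathlib

/-!
Comparison with the barrier `v = C e^{-a|x'|}`, `a = 1/N`. Where `u ≤ 1/2` we have
`Δu = u - u^p ≥ u/2`, while off the axis every second directional derivative of `v` is at most
`a² v`, so `Δv ≤ N a² v ≤ v/2`. If `u - v` were positive somewhere on `{|x'| ≥ R₀}` it would attain
a positive maximum there (periodicity in `x₁` and decay in `x'` supply compactness), and at that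
interior maximum the second derivative test gives `Δu ≤ Δv`, hence `u/2 ≤ v/2 < u/2`. On
`{|x'| ≤ R₀}` the periodic function `u` is bounded, which fixes `C`.
-/

open Real

/-- Unit vector along the first coordinate axis of `ℝ^N`. -/
noncomputable def e1 (N : ℕ) : EuclideanSpace ℝ (Fin N) :=
  if h : 0 < N then EuclideanSpace.single (⟨0, h⟩ : Fin N) (1 : ℝ) else 0

/-- Laplacian of a function on `ℝ^N`. -/
noncomputable def lap {N : ℕ} (f : EuclideanSpace ℝ (Fin N) → ℝ)
    (x : EuclideanSpace ℝ (Fin N)) : ℝ :=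
  ∑ i : Fin N, deriv (deriv (fun t : ℝ => f (x + t • EuclideanSpace.single i (1 : ℝ)))) 0

open Filter Topology
open scoped RealInnerProductSpace

theorem IsLocalMax.deriv_deriv_nonpos {f : ℝ → ℝ} {x : ℝ} (h : IsLocalMax f x)
    (hc : ContinuousAt f x) : deriv (deriv f) x ≤ 0 := by
  by_contra! hpos
  have hmin := isLocalMin_of_deriv_deriv_pos hpos h.deriv_eq_zero hc
  have hconst : f =ᶠ[𝓝 x] fun _ => f x := (h.and hmin).mono fun y hy => le_antisymm hy.1 hy.2
  have : deriv (deriv f) x = 0 := by simp [hconst.deriv.deriv_eq]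
  linarith

section Line

variable {E : Type*} [NormedAddCommGroup E] [NormedSpace ℝ E]

theorem ContDiffAt.comp_line {φ : E → ℝ} {x : E} (d : E) (hφ : ContDiffAt ℝ 2 φ x) :
    ContDiffAt ℝ 2 (fun t : ℝ => φ (x + t • d)) 0 :=
  (by simpa using hφ : ContDiffAt ℝ 2 φ (x + (0 : ℝ) • d)).comp (0 : ℝ) (by fun_prop)

theorem deriv_deriv_sub_of_contDiffAt {F G : ℝ → ℝ} {t : ℝ} (hF : ContDiffAt ℝ 2 F t)
    (hG : ContDiffAt ℝ 2 G t) :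
    deriv (deriv (F - G)) t = deriv (deriv F) t - deriv (deriv G) t := by
  have hderiv : deriv (F - G) =ᶠ[𝓝 t] deriv F - deriv G := by
    filter_upwards [hF.eventually (by simp), hG.eventually (by simp)] with s hFs hGs
    exact deriv_sub (hFs.differentiableAt two_ne_zero) (hGs.differentiableAt two_ne_zero)
  rw [hderiv.deriv_eq]
  exact deriv_sub ((hF.derivWithin (m := 1) le_rfl).differentiableAt one_ne_zero)
    ((hG.derivWithin (m := 1) le_rfl).differentiableAt one_ne_zero)

theorem deriv_deriv_line_le_of_isLocalMax_sub {f g : E → ℝ} {x : E} (d : E)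
    (hf : ContDiffAt ℝ 2 f x) (hg : ContDiffAt ℝ 2 g x) (h : IsLocalMax (f - g) x) :
    deriv (deriv fun t : ℝ => f (x + t • d)) 0 ≤ deriv (deriv fun t : ℝ => g (x + t • d)) 0 := by
  have hF := hf.comp_line d
  have hG := hg.comp_line d
  have hmax : IsLocalMax ((fun t : ℝ => f (x + t • d)) - fun t : ℝ => g (x + t • d)) 0 :=
    (by simpa using h : IsLocalMax (f - g) (x + (0 : ℝ) • d)).comp_continuous
      (g := fun t : ℝ => x + t • d) (by fun_prop)
  have := hmax.deriv_deriv_nonpos (hF.continuousAt.sub hG.continuousAt)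
  rw [deriv_deriv_sub_of_contDiffAt hF hG] at this
  linarith

end Line

theorem lap_le_lap_of_isLocalMax_sub {N : ℕ} {f g : EuclideanSpace ℝ (Fin N) → ℝ}
    {x : EuclideanSpace ℝ (Fin N)} (hf : ContDiffAt ℝ 2 f x) (hg : ContDiffAt ℝ 2 g x)
    (h : IsLocalMax (f - g) x) : lap f x ≤ lap g x :=
  Finset.sum_le_sum fun _ _ => deriv_deriv_line_le_of_isLocalMax_sub _ hf hg h

theorem deriv_deriv_exp_neg_sqrt_quadratic_le {a b c r : ℝ} (ha : 0 ≤ a) (hr : 0 < r)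
    (hbc : b ^ 2 ≤ c * r ^ 2) :
    deriv (deriv fun t => exp (-(a * √(r ^ 2 + 2 * b * t + c * t ^ 2)))) 0 ≤
      a ^ 2 * c * exp (-(a * r)) := by
  set q : ℝ → ℝ := fun t => r ^ 2 + 2 * b * t + c * t ^ 2
  set s : ℝ → ℝ := fun t => √(q t)
  set φ : ℝ → ℝ := fun t => exp (-(a * s t))
  have hq : ∀ t, HasDerivAt q (2 * b + 2 * c * t) t := fun t => by
    have := (((hasDerivAt_id' t).const_mul (2 * b)).const_add (r ^ 2)).fun_add
      ((hasDerivAt_pow 2 t).const_mul c)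
    exact this.congr_deriv (by ring)
  have hs0 : s 0 = r := by simp [s, q, hr.le]
  have hs : ∀ t, 0 < q t → HasDerivAt s ((2 * b + 2 * c * t) / (2 * s t)) t :=
    fun t ht => (hq t).sqrt ht.ne'
  have hφ : ∀ t, 0 < q t →
      HasDerivAt φ (φ t * -(a * ((2 * b + 2 * c * t) / (2 * s t)))) t :=
    fun t ht => ((hs t ht).const_mul a).neg.exp
  have hq0 : 0 < q 0 := by simp [q]; positivity
  have hqpos : ∀ᶠ t in 𝓝 0, 0 < q t :=
    (show Continuous q by fun_prop).continuousAt.eventually (eventually_gt_nhds hq0)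
  have hderiv : deriv φ =ᶠ[𝓝 0] fun t => φ t * -(a * ((2 * b + 2 * c * t) / (2 * s t))) :=
    hqpos.mono fun t ht => (hφ t ht).deriv
  have hquot := (((hasDerivAt_id (0 : ℝ)).const_mul (2 * c)).const_add (2 * b)).fun_div
    ((hs 0 hq0).const_mul 2) (by simp [hs0, hr.ne'])
  have hψ : HasDerivAt (fun t => φ t * -(a * ((2 * b + 2 * c * t) / (2 * s t)))) _ 0 :=
    (hφ 0 hq0).mul (hquot.const_mul a).neg
  rw [hderiv.deriv_eq, hψ.deriv]
  simp only [φ, hs0, id, mul_zero, add_zero, mul_one]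
  have hformula : ∀ v : ℝ, v * -(a * (2 * b / (2 * r))) * -(a * (2 * b / (2 * r))) +
      v * -(a * ((2 * c * (2 * r) - 2 * b * (2 * (2 * b / (2 * r)))) / (2 * r) ^ 2)) =
      v * (a ^ 2 * b ^ 2 / r ^ 2 - a * (c * r ^ 2 - b ^ 2) / r ^ 3) := fun v => by
    field_simp; ring
  rw [hformula]
  have hfirst : a ^ 2 * b ^ 2 / r ^ 2 ≤ a ^ 2 * c := by
    rw [div_le_iff₀ (by positivity)]; nlinarith [sq_nonneg a]
  have hsecond : 0 ≤ a * (c * r ^ 2 - b ^ 2) / r ^ 3 :=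
    div_nonneg (mul_nonneg ha (by linarith)) (by positivity)
  nlinarith [exp_pos (-(a * r))]

theorem deriv_deriv_exp_neg_norm_le {F : Type*} [NormedAddCommGroup F] [InnerProductSpace ℝ F]
    {a : ℝ} (ha : 0 ≤ a) {y : F} (hy : y ≠ 0) (d : F) :
    deriv (deriv fun t : ℝ => exp (-(a * ‖y + t • d‖))) 0 ≤
      a ^ 2 * ‖d‖ ^ 2 * exp (-(a * ‖y‖)) := by
  have hsqrt : ∀ t : ℝ, ‖y + t • d‖ = √(‖y‖ ^ 2 + 2 * ⟪y, d⟫ * t + ‖d‖ ^ 2 * t ^ 2) :=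
    fun t => by
      rw [← sqrt_sq (norm_nonneg _), norm_add_sq_real, inner_smul_right, norm_smul, mul_pow,
        Real.norm_eq_abs, sq_abs]
      ring_nf
  simp only [hsqrt]
  refine deriv_deriv_exp_neg_sqrt_quadratic_le ha (norm_pos_iff.2 hy) ?_
  have := abs_real_inner_le_norm y d
  nlinarith [abs_nonneg ⟪y, d⟫, sq_abs ⟪y, d⟫, norm_nonneg y, norm_nonneg d]

section Transverse

variable {N : ℕ}

noncomputable def transverse (i : Fin N) :
    EuclideanSpace ℝ (Fin N) →L[ℝ] EuclideanSpace ℝ (Fin N) :=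
  ContinuousLinearMap.id ℝ _ - (EuclideanSpace.proj i).smulRight (EuclideanSpace.single i (1 : ℝ))

theorem transverse_apply (i : Fin N) (x : EuclideanSpace ℝ (Fin N)) :
    transverse i x = x - x i • EuclideanSpace.single i (1 : ℝ) := by
  simp [transverse]

@[simp]
theorem transverse_single_self (i : Fin N) :
    transverse i (EuclideanSpace.single i (1 : ℝ)) = 0 := by
  simp [transverse_apply]

theorem norm_le_norm_transverse_add_abs (i : Fin N) (x : EuclideanSpace ℝ (Fin N)) :
    ‖x‖ ≤ ‖transverse i x‖ + |x i| := by
  calc ‖x‖ = ‖transverse i x + x i • EuclideanSpace.single i (1 : ℝ)‖ := by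
        rw [transverse_apply, sub_add_cancel]
    _ ≤ ‖transverse i x‖ + |x i| := by
        simpa [norm_smul] using
          norm_add_le (transverse i x) (x i • EuclideanSpace.single i (1 : ℝ))

theorem norm_transverse_le (i : Fin N) (x : EuclideanSpace ℝ (Fin N)) :
    ‖transverse i x‖ ≤ ‖x‖ := by
  have horth : ⟪transverse i x, x i • EuclideanSpace.single i (1 : ℝ)⟫ = 0 := by
    simp [transverse_apply, inner_sub_left, inner_smul_left, inner_smul_right,
      EuclideanSpace.inner_single_right]
  have hpyth := norm_add_sq_eq_norm_sq_add_norm_sq_of_inner_eq_zero _ _ horth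
  rw [transverse_apply, sub_add_cancel, ← transverse_apply] at hpyth
  nlinarith [norm_nonneg x, norm_nonneg (transverse i x),
    norm_nonneg (x i • EuclideanSpace.single i (1 : ℝ))]

noncomputable def expBarrier (i : Fin N) (a C : ℝ) (x : EuclideanSpace ℝ (Fin N)) : ℝ :=
  C * exp (-(a * ‖transverse i x‖))

theorem continuous_expBarrier (i : Fin N) (a C : ℝ) : Continuous (expBarrier i a C) := by
  unfold expBarrier; fun_prop

theorem contDiffAt_expBarrier (i : Fin N) (a C : ℝ) {x : EuclideanSpace ℝ (Fin N)}
    (hx : transverse i x ≠ 0) : ContDiffAt ℝ 2 (expBarrier i a C) x :=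
  contDiffAt_const.mul
    (contDiffAt_const.mul ((transverse i).contDiff.contDiffAt.norm ℝ hx)).neg.exp

theorem lap_expBarrier_le (i : Fin N) {a C : ℝ} (ha : 0 ≤ a) (hC : 0 ≤ C)
    {x : EuclideanSpace ℝ (Fin N)} (hx : transverse i x ≠ 0) :
    lap (expBarrier i a C) x ≤ N * a ^ 2 * expBarrier i a C x := by
  have hdir : ∀ j : Fin N, deriv (deriv fun t : ℝ =>
      expBarrier i a C (x + t • EuclideanSpace.single j (1 : ℝ))) 0 ≤
        a ^ 2 * expBarrier i a C x := by
    intro j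
    have hPj : ‖transverse i (EuclideanSpace.single j (1 : ℝ))‖ ^ 2 ≤ 1 := by
      simpa using pow_le_pow_left₀ (norm_nonneg _)
        (norm_transverse_le i (EuclideanSpace.single j (1 : ℝ))) 2
    simp only [expBarrier, map_add, map_smul, deriv_const_mul_field']
    calc C * deriv (deriv fun t : ℝ => exp (-(a * ‖transverse i x +
            t • transverse i (EuclideanSpace.single j (1 : ℝ))‖))) 0
        ≤ C * (a ^ 2 * ‖transverse i (EuclideanSpace.single j (1 : ℝ))‖ ^ 2 *
            exp (-(a * ‖transverse i x‖))) :=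
          mul_le_mul_of_nonneg_left (deriv_deriv_exp_neg_norm_le ha hx _) hC
      _ ≤ C * (a ^ 2 * 1 * exp (-(a * ‖transverse i x‖))) := by gcongr
      _ = a ^ 2 * (C * exp (-(a * ‖transverse i x‖))) := by ring
  calc lap (expBarrier i a C) x ≤ ∑ _j : Fin N, a ^ 2 * expBarrier i a C x :=
        Finset.sum_le_sum fun j _ => hdir j
    _ = N * a ^ 2 * expBarrier i a C x := by simp; ring

theorem exists_add_zsmul_smul_single_mem_Ico (i : Fin N) {T : ℝ} (hT : 0 < T)
    (x : EuclideanSpace ℝ (Fin N)) :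
    ∃ k : ℤ, (x + k • T • EuclideanSpace.single i (1 : ℝ)) i ∈ Set.Ico 0 T := by
  refine ⟨-toIcoDiv hT 0 (x i), ?_⟩
  have := toIcoMod_mem_Ico hT 0 (x i)
  rw [← self_sub_toIcoDiv_zsmul, zero_add] at this
  simpa [sub_eq_add_neg] using this

theorem isCompact_transverse_strip (i : Fin N) (A B T : ℝ) :
    IsCompact {x : EuclideanSpace ℝ (Fin N) |
      ‖transverse i x‖ ∈ Set.Icc A B ∧ x i ∈ Set.Icc 0 T} := by
  refine Metric.isCompact_of_isClosed_isBounded ?_ ?_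
  · exact (isClosed_Icc.preimage (by fun_prop)).inter
      (isClosed_Icc.preimage (EuclideanSpace.proj i).continuous)
  · refine (Metric.isBounded_closedBall (x := 0) (r := B + T)).subset fun x hx => ?_
    rw [Metric.mem_closedBall, dist_zero_right]
    have := norm_le_norm_transverse_add_abs i x
    rw [abs_of_nonneg hx.2.1] at this
    linarith [hx.1.2, hx.2.2]

namespace Function.Periodic

variable {i : Fin N} {T : ℝ} {w : EuclideanSpace ℝ (Fin N) → ℝ}

theorem exists_isMaxOn_transverse_Icc (hper : Periodic w (T • EuclideanSpace.single i (1 : ℝ)))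
    (hw : Continuous w) (hT : 0 < T) {A B : ℝ} {x₁ : EuclideanSpace ℝ (Fin N)}
    (hx₁ : ‖transverse i x₁‖ ∈ Set.Icc A B) :
    ∃ x₀, ‖transverse i x₀‖ ∈ Set.Icc A B ∧
      IsMaxOn w {x | ‖transverse i x‖ ∈ Set.Icc A B} x₀ := by
  have hshift : ∀ x, ∃ y, w y = w x ∧ ‖transverse i y‖ = ‖transverse i x‖ ∧
      y i ∈ Set.Icc 0 T := fun x => by
    obtain ⟨k, hk⟩ := exists_add_zsmul_smul_single_mem_Ico i hT x
    exact ⟨_, hper.zsmul k x, by simp, Set.Ico_subset_Icc_self hk⟩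
  obtain ⟨y₁, -, hy₁, hy₁T⟩ := hshift x₁
  obtain ⟨x₀, hx₀, hmax⟩ := (isCompact_transverse_strip i A B T).exists_isMaxOn
    ⟨y₁, hy₁ ▸ hx₁, hy₁T⟩ hw.continuousOn
  refine ⟨x₀, hx₀.1, fun x hx => ?_⟩
  obtain ⟨y, hy, hyx, hyT⟩ := hshift x
  show w x ≤ w x₀
  rw [← hy]
  exact hmax ⟨hyx ▸ hx, hyT⟩

theorem exists_isMaxOn_transverse_Ici (hper : Periodic w (T • EuclideanSpace.single i (1 : ℝ)))
    (hw : Continuous w) (hT : 0 < T)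
    (hdecay : ∀ δ : ℝ, 0 < δ → ∃ R : ℝ, ∀ x, R ≤ ‖transverse i x‖ → w x ≤ δ)
    {R₀ : ℝ} {x₁ : EuclideanSpace ℝ (Fin N)} (hx₁ : R₀ ≤ ‖transverse i x₁‖) (hpos : 0 < w x₁) :
    ∃ x₀, R₀ ≤ ‖transverse i x₀‖ ∧ IsMaxOn w {x | R₀ ≤ ‖transverse i x‖} x₀ := by
  obtain ⟨R, hR⟩ := hdecay (w x₁ / 2) (by positivity)
  set B := max R ‖transverse i x₁‖
  obtain ⟨x₀, hx₀, hmax⟩ := hper.exists_isMaxOn_transverse_Icc hw hT (B := B)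
    ⟨hx₁, le_max_right _ _⟩
  have hx₁x₀ : w x₁ ≤ w x₀ := hmax ⟨hx₁, le_max_right _ _⟩
  refine ⟨x₀, hx₀.1, fun x hx => ?_⟩
  rcases le_or_gt ‖transverse i x‖ B with hxB | hxB
  · exact hmax ⟨hx, hxB⟩
  · have := hR x ((le_max_left _ _).trans hxB.le)
    show w x ≤ w x₀
    linarith

end Function.Periodic

theorem le_expBarrier_of_mul_le_lap {i : Fin N} {T a c C R₀ : ℝ}
    {u : EuclideanSpace ℝ (Fin N) → ℝ} (hu : ContDiff ℝ 2 u)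
    (hper : Function.Periodic u (T • EuclideanSpace.single i (1 : ℝ))) (hT : 0 < T)
    (hdecay : ∀ δ : ℝ, 0 < δ → ∃ R : ℝ, ∀ x, R ≤ ‖transverse i x‖ → u x ≤ δ)
    (ha : 0 ≤ a) (hC : 0 ≤ C) (hc : 0 < c) (hac : N * a ^ 2 ≤ c) (hR₀ : 0 ≤ R₀)
    (hbdry : ∀ x, ‖transverse i x‖ = R₀ → u x ≤ expBarrier i a C x)
    (hlap : ∀ x, R₀ < ‖transverse i x‖ → c * u x ≤ lap u x) :
    ∀ x, R₀ ≤ ‖transverse i x‖ → u x ≤ expBarrier i a C x := by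
  by_contra! ⟨x₁, hx₁, hlt⟩
  set w := u - expBarrier i a C
  have hv : ∀ x, 0 ≤ expBarrier i a C x := fun x => by unfold expBarrier; positivity
  have hwper : Function.Periodic w (T • EuclideanSpace.single i (1 : ℝ)) := fun x => by
    simp [w, hper x, expBarrier]
  have hwdecay : ∀ δ : ℝ, 0 < δ → ∃ R : ℝ, ∀ x, R ≤ ‖transverse i x‖ → w x ≤ δ :=
    fun δ hδ => (hdecay δ hδ).imp fun R hR x hx => (sub_le_self _ (hv x)).trans (hR x hx)
  obtain ⟨x₀, hx₀, hmax⟩ := hwper.exists_isMaxOn_transverse_Ici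
    (hu.continuous.sub (continuous_expBarrier i a C)) hT hwdecay hx₁ (sub_pos.2 hlt)
  have hw₀ : expBarrier i a C x₀ < u x₀ := sub_pos.1 ((sub_pos.2 hlt).trans_le (hmax hx₁))
  have hR₀x₀ : R₀ < ‖transverse i x₀‖ := hx₀.lt_of_ne fun h => (hbdry x₀ h.symm).not_gt hw₀
  have hne : transverse i x₀ ≠ 0 := norm_pos_iff.1 (hR₀.trans_lt hR₀x₀)
  have hloc : IsLocalMax w x₀ := by
    have hopen : IsOpen {x | R₀ < ‖transverse i x‖} := isOpen_lt continuous_const (by fun_prop)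
    filter_upwards [hopen.mem_nhds hR₀x₀] with x hx
    exact hmax (le_of_lt hx)
  have : c * u x₀ < c * u x₀ :=
    calc c * u x₀ ≤ lap u x₀ := hlap x₀ hR₀x₀
      _ ≤ lap (expBarrier i a C) x₀ :=
        lap_le_lap_of_isLocalMax_sub hu.contDiffAt (contDiffAt_expBarrier i a C hne) hloc
      _ ≤ N * a ^ 2 * expBarrier i a C x₀ := lap_expBarrier_le i ha hC hne
      _ ≤ c * expBarrier i a C x₀ := mul_le_mul_of_nonneg_right hac (hv x₀)
      _ < c * u x₀ := mul_lt_mul_of_pos_left hw₀ hc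
  exact lt_irrefl _ this

end Transverse

theorem half_le_sub_rpow {s p : ℝ} (hs : 0 < s) (hs' : s ≤ 1 / 2) (hp : 2 ≤ p) :
    s / 2 ≤ s - s ^ p := by
  have := rpow_le_rpow_of_exponent_ge hs (by linarith) hp
  rw [rpow_two] at this
  nlinarith

/-- A positive periodic solution of `-Δu + u - u^p = 0` on `S¹/ε × ℝ^{N-1}` tending to
`0` as `|x'| → ∞` uniformly in `x₁` decays exponentially in `x'`:
`u(x₁,x') ≤ C e^{-a|x'|}`. -/
theorem stmt12 (N : ℕ) (hN : 2 ≤ N) (p : ℝ) (hp : 2 ≤ p)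
    (ε : ℝ) (hε : 0 < ε)
    (u : EuclideanSpace ℝ (Fin N) → ℝ)
    (hupos : ∀ x, 0 < u x) (husmooth : ContDiff ℝ 2 u)
    (hueq : ∀ x, -(lap u x) + u x - u x ^ p = 0)
    (huper : ∀ x, u (x + (2 * Real.pi / ε) • e1 N) = u x)
    (hudecay : ∀ δ : ℝ, 0 < δ → ∃ R : ℝ, ∀ x : EuclideanSpace ℝ (Fin N),
      R ≤ ‖x - x (⟨0, by omega⟩ : Fin N) • e1 N‖ → u x ≤ δ) :
    ∃ a > 0, ∃ C > 0, ∀ x : EuclideanSpace ℝ (Fin N),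
      u x ≤ C * Real.exp (-a * ‖x - x (⟨0, by omega⟩ : Fin N) • e1 N‖) := by
  set i₀ : Fin N := ⟨0, by omega⟩
  have he1 : e1 N = EuclideanSpace.single i₀ 1 := dif_pos (by omega)
  simp only [he1, ← transverse_apply, neg_mul] at huper hudecay ⊢
  have hT : 0 < 2 * π / ε := div_pos two_pi_pos hε
  obtain ⟨R, hR⟩ := hudecay (1 / 2) (by norm_num)
  set R₀ := max R 0
  obtain ⟨z, -, hz⟩ := Function.Periodic.exists_isMaxOn_transverse_Icc huper husmooth.continuous
    hT (A := 0) (B := R₀) (x₁ := 0) (by simp [R₀])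
  set a : ℝ := 1 / N
  have ha : 0 < a := by positivity
  have hac : N * a ^ 2 ≤ 1 / 2 :=
    calc N * a ^ 2 = 1 / N := by simp only [a]; field_simp
      _ ≤ 1 / 2 := one_div_le_one_div_of_le two_pos (by exact_mod_cast hN)
  set C := u z * exp (a * R₀)
  have hC : 0 < C := mul_pos (hupos z) (exp_pos _)
  have hnear : ∀ x, ‖transverse i₀ x‖ ≤ R₀ → u x ≤ expBarrier i₀ a C x := fun x hx =>
    calc u x ≤ u z := hz ⟨norm_nonneg _, hx⟩
      _ ≤ u z * exp (a * (R₀ - ‖transverse i₀ x‖)) :=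
        le_mul_of_one_le_right (hupos z).le (one_le_exp (mul_nonneg ha.le (sub_nonneg.2 hx)))
      _ = expBarrier i₀ a C x := by
        rw [expBarrier, mul_assoc, ← exp_add]; ring_nf
  have hlap : ∀ x, R₀ < ‖transverse i₀ x‖ → 1 / 2 * u x ≤ lap u x := fun x hx => by
    have := half_le_sub_rpow (hupos x) (hR x ((le_max_left _ _).trans hx.le)) hp
    linarith [hueq x]
  have hfar := le_expBarrier_of_mul_le_lap husmooth huper hT hudecay ha.le hC.le
    (by norm_num) hac (le_max_right _ _) (fun x hx => hnear x hx.le) hlap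
  refine ⟨a, ha, C, hC, fun x => ?_⟩
  rcases le_or_gt R₀ ‖transverse i₀ x‖ with hx | hx
  · exact hfar x hx
  · exact hnear x hx.le
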